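/- Under Assumptions 1, 2 and 3(b), the Hessian of G at Γ_m is Lipschitz in the location parameter in the following sense: for all h ∈ ℝ^d and all V ∈ S(H), ‖(∇²G_{m+h}(Γ_m) − ∇²G_m(Γ_m))(V)‖_F ≤ 12(C√‖Γ_m‖_F + C^{3/4}) ‖h‖ ‖V‖_F. -/

import Mathlib

open MeasureTheory ProbabilityTheory Filter
open scoped ENNReal NNReal RealInnerProductSpace BigOperators

noncomputable section

/-- The space `S(H)` of `d × d` real matrices, viewed as a Euclidean space, so that its
norm is the Frobenius norm and its inner product `⟪A, B⟫ = ∑ i j, A i j * B i j = tr (Aᵀ B)`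
is the Frobenius inner product. -/
abbrev Mat (d : ℕ) := EuclideanSpace ℝ (Fin d × Fin d)

/-- `Y(h) = (x − h)(x − h)ᵀ`. -/
def Ymat {d : ℕ} (x h : EuclideanSpace ℝ (Fin d)) : Mat d :=
  (WithLp.equiv 2 _).symm (fun p => (x p.1 - h p.1) * (x p.2 - h p.2))

variable {d : ℕ} {Ω : Type*} [MeasurableSpace Ω]

/-- `G_h(V) = E[‖Y(h) − V‖_F − ‖Y(h)‖_F]`. -/
def Gfun (P : Measure Ω) (X : Ω → EuclideanSpace ℝ (Fin d))
    (h : EuclideanSpace ℝ (Fin d)) (V : Mat d) : ℝ :=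
  ∫ ω, (‖Ymat (X ω) h - V‖ - ‖Ymat (X ω) h‖) ∂P

/-- The gradient `∇G_h(V) = −E[(Y(h) − V)/‖Y(h) − V‖_F]`. -/
def gradG (P : Measure Ω) (X : Ω → EuclideanSpace ℝ (Fin d))
    (h : EuclideanSpace ℝ (Fin d)) (V : Mat d) : Mat d :=
  - ∫ ω, ‖Ymat (X ω) h - V‖⁻¹ • (Ymat (X ω) h - V) ∂P

/-- The Hessian operator
`∇²G_h(V)(A) = E[(1/‖Y(h) − V‖_F)(A − ⟪Y(h) − V, A⟫_F (Y(h) − V)/‖Y(h) − V‖_F²)]`. -/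
def hessG (P : Measure Ω) (X : Ω → EuclideanSpace ℝ (Fin d))
    (h : EuclideanSpace ℝ (Fin d)) (V : Mat d) (A : Mat d) : Mat d :=
  ∫ ω, ‖Ymat (X ω) h - V‖⁻¹ •
    (A - (‖Ymat (X ω) h - V‖ ^ 2)⁻¹ • (⟪Ymat (X ω) h - V, A⟫ • (Ymat (X ω) h - V))) ∂P


/-!
Write `U = Y(m+h) − Γ_m` and `W = Y(m) − Γ_m`. The Hessian integrand `A ↦ ‖U‖⁻¹ (A − ⟪u, A⟫ u)`,
`u = U / ‖U‖`, moves by at most `6 ‖U − W‖ ‖A‖ / (‖U‖ ‖W‖)` when `U` is replaced by `W`. Since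
`Y(m+h) − Y(m) = −(h (X−m−h)ᵀ + (X−m) hᵀ)` and `‖X − k‖ = √‖Y(k)‖ ≤ √‖Y(k) − Γ_m‖ + √‖Γ_m‖`, this is
at most `6 ‖h‖ ‖A‖ (‖U‖^{-1/2} ‖W‖⁻¹ + ‖U‖⁻¹ ‖W‖^{-1/2} + 2 √‖Γ_m‖ ‖U‖⁻¹ ‖W‖⁻¹)`. Cauchy–Schwarz and
the second inverse moment bound of Assumption 3(b) bound the expectations of the three terms by
`C^{3/4}`, `C^{3/4}` and `C`.
-/

lemma abs_inv_norm_sub_inv_norm_le {E : Type*} [NormedAddCommGroup E] {U W : E} (hU : U ≠ 0)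
    (hW : W ≠ 0) :
    |‖U‖⁻¹ - ‖W‖⁻¹| ≤ ‖U - W‖ / (‖U‖ * ‖W‖) := by
  have hU' : 0 < ‖U‖ := norm_pos_iff.mpr hU
  have hW' : 0 < ‖W‖ := norm_pos_iff.mpr hW
  rw [inv_sub_inv hU'.ne' hW'.ne', abs_div, abs_of_pos (mul_pos hU' hW'), abs_sub_comm]
  gcongr
  exact abs_norm_sub_norm_le U W

section HessIntegrand

variable {F : Type*} [NormedAddCommGroup F] [InnerProductSpace ℝ F]

-- `hessG P X h V A = ∫ ω, hessIntegrand (Ymat (X ω) h - V) A ∂P` holds by `rfl`.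
def hessIntegrand (U A : F) : F := ‖U‖⁻¹ • (A - (‖U‖ ^ 2)⁻¹ • (⟪U, A⟫ • U))

lemma hessIntegrand_eq_of_ne_zero {U : F} (hU : U ≠ 0) (A : F) :
    hessIntegrand U A = ‖U‖⁻¹ • (A - ⟪‖U‖⁻¹ • U, A⟫ • (‖U‖⁻¹ • U)) := by
  have : ‖U‖ ≠ 0 := norm_ne_zero_iff.mpr hU
  rw [hessIntegrand, real_inner_smul_left]
  match_scalars <;> field_simp

lemma norm_sub_inner_smul_le {u : F} (hu : ‖u‖ ≤ 1) (A : F) : ‖A - ⟪u, A⟫ • u‖ ≤ 2 * ‖A‖ :=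
  calc ‖A - ⟪u, A⟫ • u‖ ≤ ‖A‖ + ‖u‖ * ‖A‖ * ‖u‖ := by
        grw [norm_sub_le, norm_smul, Real.norm_eq_abs, abs_real_inner_le_norm]
    _ ≤ 2 * ‖A‖ := by
        have : ‖u‖ * ‖u‖ ≤ 1 := mul_le_one₀ hu (norm_nonneg u) hu
        nlinarith [mul_nonneg (sub_nonneg.2 this) (norm_nonneg A)]

lemma norm_inner_smul_sub_inner_smul_le {u w : F} (hu : ‖u‖ ≤ 1) (hw : ‖w‖ ≤ 1) (A : F) :
    ‖⟪u, A⟫ • u - ⟪w, A⟫ • w‖ ≤ 2 * ‖u - w‖ * ‖A‖ := by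
  have hsplit : ⟪u, A⟫ • u - ⟪w, A⟫ • w = ⟪u - w, A⟫ • u + ⟪w, A⟫ • (u - w) := by
    rw [inner_sub_left]; module
  calc ‖⟪u, A⟫ • u - ⟪w, A⟫ • w‖ ≤ ‖u - w‖ * ‖A‖ * ‖u‖ + ‖w‖ * ‖A‖ * ‖u - w‖ := by
        grw [hsplit, norm_add_le, norm_smul, norm_smul, Real.norm_eq_abs, Real.norm_eq_abs,
          abs_real_inner_le_norm, abs_real_inner_le_norm]
    _ ≤ 2 * ‖u - w‖ * ‖A‖ := by
        nlinarith [mul_nonneg (norm_nonneg (u - w)) (norm_nonneg A)]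

lemma norm_inv_norm_smul_sub_le {U W : F} (hU : U ≠ 0) (hW : W ≠ 0) :
    ‖‖U‖⁻¹ • U - ‖W‖⁻¹ • W‖ ≤ 2 * ‖U - W‖ / ‖U‖ := by
  have hsplit : ‖U‖⁻¹ • U - ‖W‖⁻¹ • W = ‖U‖⁻¹ • (U - W) + (‖U‖⁻¹ - ‖W‖⁻¹) • W := by module
  have hW' : ‖W‖ ≠ 0 := norm_ne_zero_iff.mpr hW
  calc ‖‖U‖⁻¹ • U - ‖W‖⁻¹ • W‖ ≤ ‖U‖⁻¹ * ‖U - W‖ + ‖U - W‖ / (‖U‖ * ‖W‖) * ‖W‖ := by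
        grw [hsplit, norm_add_le, norm_smul, norm_smul, norm_inv, norm_norm, Real.norm_eq_abs,
          abs_inv_norm_sub_inv_norm_le hU hW]
    _ = 2 * ‖U - W‖ / ‖U‖ := by field_simp; ring

lemma norm_hessIntegrand_le (U A : F) : ‖hessIntegrand U A‖ ≤ 2 * ‖A‖ * ‖U‖⁻¹ := by
  rcases eq_or_ne U 0 with rfl | hU
  · simp [hessIntegrand]
  rw [hessIntegrand_eq_of_ne_zero hU, norm_smul, norm_inv, norm_norm, mul_comm]
  gcongr
  exact norm_sub_inner_smul_le (norm_smul_inv_norm hU).le A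

lemma norm_hessIntegrand_sub_le {U W : F} (hU : U ≠ 0) (hW : W ≠ 0) (A : F) :
    ‖hessIntegrand U A - hessIntegrand W A‖ ≤ 6 * ‖U - W‖ * ‖A‖ / (‖U‖ * ‖W‖) := by
  set u := ‖U‖⁻¹ • U
  set w := ‖W‖⁻¹ • W
  have hu : ‖u‖ = 1 := norm_smul_inv_norm hU
  have hw : ‖w‖ = 1 := norm_smul_inv_norm hW
  have hsplit : hessIntegrand U A - hessIntegrand W A =
      (‖U‖⁻¹ - ‖W‖⁻¹) • (A - ⟪u, A⟫ • u) + ‖W‖⁻¹ • (⟪w, A⟫ • w - ⟪u, A⟫ • u) := by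
    rw [hessIntegrand_eq_of_ne_zero hU, hessIntegrand_eq_of_ne_zero hW]; module
  have hU' : 0 < ‖U‖ := norm_pos_iff.mpr hU
  have hW' : 0 < ‖W‖ := norm_pos_iff.mpr hW
  calc ‖hessIntegrand U A - hessIntegrand W A‖
      ≤ ‖U - W‖ / (‖U‖ * ‖W‖) * (2 * ‖A‖) + ‖W‖⁻¹ * (2 * ‖w - u‖ * ‖A‖) := by
        grw [hsplit, norm_add_le, norm_smul, norm_smul, norm_inv, norm_norm, Real.norm_eq_abs,
          abs_inv_norm_sub_inv_norm_le hU hW, norm_sub_inner_smul_le hu.le,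
          norm_inner_smul_sub_inner_smul_le hw.le hu.le]
    _ ≤ ‖U - W‖ / (‖U‖ * ‖W‖) * (2 * ‖A‖) + ‖W‖⁻¹ * (2 * (2 * ‖U - W‖ / ‖U‖) * ‖A‖) := by
        rw [norm_sub_rev w u]; grw [norm_inv_norm_smul_sub_le hU hW]
    _ = 6 * ‖U - W‖ * ‖A‖ / (‖U‖ * ‖W‖) := by field_simp; ring

lemma norm_hessIntegrand_sub_le_of_norm_sub_le {U W : F} (hU : U ≠ 0) (hW : W ≠ 0) {t s : ℝ}
    (hUW : ‖U - W‖ ≤ t * (√‖U‖ + √‖W‖ + 2 * s)) (A : F) :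
    ‖hessIntegrand U A - hessIntegrand W A‖ ≤
      6 * t * ‖A‖ * (√‖U‖⁻¹ * ‖W‖⁻¹ + ‖U‖⁻¹ * √‖W‖⁻¹ + 2 * s * (‖U‖⁻¹ * ‖W‖⁻¹)) := by
  have hU' : 0 < ‖U‖ := norm_pos_iff.mpr hU
  have hW' : 0 < ‖W‖ := norm_pos_iff.mpr hW
  calc ‖hessIntegrand U A - hessIntegrand W A‖
      ≤ 6 * (t * (√‖U‖ + √‖W‖ + 2 * s)) * ‖A‖ / (‖U‖ * ‖W‖) := by
        grw [norm_hessIntegrand_sub_le hU hW, hUW]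
    _ = 6 * t * ‖A‖ * (√‖U‖⁻¹ * ‖W‖⁻¹ + ‖U‖⁻¹ * √‖W‖⁻¹ + 2 * s * (‖U‖⁻¹ * ‖W‖⁻¹)) := by
        rw [Real.sqrt_inv, Real.sqrt_inv, ← Real.sqrt_div_self, ← Real.sqrt_div_self]
        field_simp

end HessIntegrand

section Moments

variable {α : Type*} [MeasurableSpace α] {μ : Measure α} {a b : α → ℝ≥0∞}

lemma lintegral_mul_le_sqrt_mul_sqrt (ha : AEMeasurable a μ) (hb : AEMeasurable b μ) :
    ∫⁻ x, a x * b x ∂μ ≤ (∫⁻ x, a x ^ 2 ∂μ) ^ (1 / 2 : ℝ) * (∫⁻ x, b x ^ 2 ∂μ) ^ (1 / 2 : ℝ) := by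
  simpa only [ENNReal.rpow_two, Pi.mul_apply] using
    ENNReal.lintegral_mul_le_Lp_mul_Lq μ Real.HolderConjugate.two_two ha hb

lemma lintegral_mul_le_of_lintegral_sq_le (ha : AEMeasurable a μ) (hb : AEMeasurable b μ)
    {c : ℝ≥0∞} (h2a : ∫⁻ x, a x ^ 2 ∂μ ≤ c) (h2b : ∫⁻ x, b x ^ 2 ∂μ ≤ c) :
    ∫⁻ x, a x * b x ∂μ ≤ c :=
  calc ∫⁻ x, a x * b x ∂μ ≤ c ^ (1 / 2 : ℝ) * c ^ (1 / 2 : ℝ) := by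
        grw [lintegral_mul_le_sqrt_mul_sqrt ha hb, h2a, h2b]
    _ = c := by rw [← ENNReal.rpow_add_of_nonneg _ _ (by norm_num) (by norm_num)]; norm_num

variable [IsProbabilityMeasure μ] {c : ℝ≥0∞}

lemma lintegral_le_sqrt_lintegral_sq (ha : AEMeasurable a μ) :
    ∫⁻ x, a x ∂μ ≤ (∫⁻ x, a x ^ 2 ∂μ) ^ (1 / 2 : ℝ) := by
  simpa using lintegral_mul_le_sqrt_mul_sqrt ha (aemeasurable_const (b := 1))

lemma lintegral_rpow_half_mul_le_of_lintegral_sq_le (ha : AEMeasurable a μ)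
    (hb : AEMeasurable b μ) (h2a : ∫⁻ x, a x ^ 2 ∂μ ≤ c) (h2b : ∫⁻ x, b x ^ 2 ∂μ ≤ c) :
    ∫⁻ x, a x ^ (1 / 2 : ℝ) * b x ∂μ ≤ c ^ (3 / 4 : ℝ) := by
  have hsq : ∀ x, (a x ^ (1 / 2 : ℝ)) ^ 2 = a x := fun x => by
    rw [← ENNReal.rpow_natCast, ← ENNReal.rpow_mul]; norm_num
  calc ∫⁻ x, a x ^ (1 / 2 : ℝ) * b x ∂μ
      ≤ (∫⁻ x, a x ∂μ) ^ (1 / 2 : ℝ) * c ^ (1 / 2 : ℝ) := by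
        grw [lintegral_mul_le_sqrt_mul_sqrt (ha.pow_const _) hb, h2b]
        simp only [hsq, le_refl]
    _ ≤ (c ^ (1 / 2 : ℝ)) ^ (1 / 2 : ℝ) * c ^ (1 / 2 : ℝ) := by
        grw [lintegral_le_sqrt_lintegral_sq ha, h2a]
    _ = c ^ (3 / 4 : ℝ) := by
        rw [← ENNReal.rpow_mul, ← ENNReal.rpow_add_of_nonneg _ _ (by norm_num) (by norm_num)]
        norm_num

end Moments

lemma lintegral_ofReal_cross_moments_le {α : Type*} [MeasurableSpace α] {μ : Measure α}
    [IsProbabilityMeasure μ] {u v : α → ℝ}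
    (hu : Measurable u) (hv : Measurable v) (hu0 : ∀ ω, 0 ≤ u ω) (hv0 : ∀ ω, 0 ≤ v ω)
    {C s : ℝ} (hC : 0 ≤ C) (hs : 0 ≤ s)
    (h2u : ∫⁻ ω, ENNReal.ofReal (u ω) ^ 2 ∂μ ≤ ENNReal.ofReal C)
    (h2v : ∫⁻ ω, ENNReal.ofReal (v ω) ^ 2 ∂μ ≤ ENNReal.ofReal C) :
    ∫⁻ ω, ENNReal.ofReal (√(u ω) * v ω + u ω * √(v ω) + 2 * s * (u ω * v ω)) ∂μ ≤
      ENNReal.ofReal (2 * C ^ (3 / 4 : ℝ) + 2 * s * C) := by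
  set a := fun ω => ENNReal.ofReal (u ω)
  set b := fun ω => ENNReal.ofReal (v ω)
  have ha : Measurable a := hu.ennreal_ofReal
  have hb : Measurable b := hv.ennreal_ofReal
  have hsqrt : ∀ {x : ℝ}, 0 ≤ x → ENNReal.ofReal √x = ENNReal.ofReal x ^ (1 / 2 : ℝ) := fun hx => by
    rw [Real.sqrt_eq_rpow, ENNReal.ofReal_rpow_of_nonneg hx (by norm_num)]
  have hpoint : ∀ ω, ENNReal.ofReal (√(u ω) * v ω + u ω * √(v ω) + 2 * s * (u ω * v ω)) =
      a ω ^ (1 / 2 : ℝ) * b ω + b ω ^ (1 / 2 : ℝ) * a ω + ENNReal.ofReal (2 * s) * (a ω * b ω) := by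
    intro ω
    have := hu0 ω; have := hv0 ω
    rw [ENNReal.ofReal_add (by positivity) (by positivity),
      ENNReal.ofReal_add (by positivity) (by positivity), ENNReal.ofReal_mul (by positivity),
      ENNReal.ofReal_mul (by positivity), ENNReal.ofReal_mul (by positivity),
      ENNReal.ofReal_mul (by positivity), hsqrt (hu0 ω), hsqrt (hv0 ω),
      mul_comm (ENNReal.ofReal (u ω)), ENNReal.ofReal_mul (hu0 ω)]
  calc ∫⁻ ω, ENNReal.ofReal (√(u ω) * v ω + u ω * √(v ω) + 2 * s * (u ω * v ω)) ∂μ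
      = ∫⁻ ω, a ω ^ (1 / 2 : ℝ) * b ω ∂μ + ∫⁻ ω, b ω ^ (1 / 2 : ℝ) * a ω ∂μ +
          ENNReal.ofReal (2 * s) * ∫⁻ ω, a ω * b ω ∂μ := by
        simp only [hpoint]
        rw [lintegral_add_left (by fun_prop), lintegral_add_left (by fun_prop),
          lintegral_const_mul _ (by fun_prop)]
    _ ≤ ENNReal.ofReal C ^ (3 / 4 : ℝ) + ENNReal.ofReal C ^ (3 / 4 : ℝ) +
          ENNReal.ofReal (2 * s) * ENNReal.ofReal C := by
        grw [lintegral_rpow_half_mul_le_of_lintegral_sq_le ha.aemeasurable hb.aemeasurable h2u h2v,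
          lintegral_rpow_half_mul_le_of_lintegral_sq_le hb.aemeasurable ha.aemeasurable h2v h2u,
          lintegral_mul_le_of_lintegral_sq_le ha.aemeasurable hb.aemeasurable h2u h2v]
    _ = ENNReal.ofReal (2 * C ^ (3 / 4 : ℝ) + 2 * s * C) := by
        rw [ENNReal.ofReal_rpow_of_nonneg hC (by norm_num), ← ENNReal.ofReal_mul (by positivity),
          ← ENNReal.ofReal_add (by positivity) (by positivity),
          ← ENNReal.ofReal_add (by positivity) (by positivity)]
        ring_nf

section Covariation

def outerProd (u v : EuclideanSpace ℝ (Fin d)) : Mat d := WithLp.toLp 2 fun p => u p.1 * v p.2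

lemma norm_outerProd (u v : EuclideanSpace ℝ (Fin d)) : ‖outerProd u v‖ = ‖u‖ * ‖v‖ := by
  rw [EuclideanSpace.norm_eq, EuclideanSpace.norm_eq, EuclideanSpace.norm_eq,
    ← Real.sqrt_mul (by positivity), Finset.sum_mul_sum, ← Finset.univ_product_univ,
    Finset.sum_product]
  simp only [outerProd, Real.norm_eq_abs, sq_abs, mul_pow]

lemma Ymat_eq_outerProd (x h : EuclideanSpace ℝ (Fin d)) : Ymat x h = outerProd (x - h) (x - h) :=
  rfl

lemma norm_Ymat (x h : EuclideanSpace ℝ (Fin d)) : ‖Ymat x h‖ = ‖x - h‖ ^ 2 := by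
  rw [Ymat_eq_outerProd, norm_outerProd, sq]

lemma Ymat_add_sub_Ymat (x m h : EuclideanSpace ℝ (Fin d)) :
    Ymat x (m + h) - Ymat x m = -(outerProd h (x - (m + h)) + outerProd (x - m) h) := by
  ext p
  simp only [Ymat_eq_outerProd, outerProd, PiLp.sub_apply, PiLp.neg_apply, PiLp.add_apply]
  ring

lemma norm_sub_le_sqrt_add_sqrt (x h : EuclideanSpace ℝ (Fin d)) (Γ : Mat d) :
    ‖x - h‖ ≤ √‖Ymat x h - Γ‖ + √‖Γ‖ := by
  have hsq : ‖x - h‖ ^ 2 ≤ ‖Ymat x h - Γ‖ + ‖Γ‖ := by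
    rw [← norm_Ymat]; exact norm_le_norm_sub_add _ _
  nlinarith [Real.sq_sqrt (norm_nonneg (Ymat x h - Γ)), Real.sq_sqrt (norm_nonneg Γ),
    Real.sqrt_nonneg ‖Ymat x h - Γ‖, Real.sqrt_nonneg ‖Γ‖, norm_nonneg (x - h)]

lemma norm_Ymat_add_sub_Ymat_le (x m h : EuclideanSpace ℝ (Fin d)) (Γ : Mat d) :
    ‖(Ymat x (m + h) - Γ) - (Ymat x m - Γ)‖ ≤
      ‖h‖ * (√‖Ymat x (m + h) - Γ‖ + √‖Ymat x m - Γ‖ + 2 * √‖Γ‖) :=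
  calc ‖(Ymat x (m + h) - Γ) - (Ymat x m - Γ)‖ ≤ ‖h‖ * ‖x - (m + h)‖ + ‖x - m‖ * ‖h‖ := by
        grw [sub_sub_sub_cancel_right, Ymat_add_sub_Ymat, norm_neg, norm_add_le, norm_outerProd,
          norm_outerProd]
    _ ≤ ‖h‖ * (√‖Ymat x (m + h) - Γ‖ + √‖Γ‖) + (√‖Ymat x m - Γ‖ + √‖Γ‖) * ‖h‖ := by
        grw [norm_sub_le_sqrt_add_sqrt x (m + h) Γ, norm_sub_le_sqrt_add_sqrt x m Γ]
    _ = ‖h‖ * (√‖Ymat x (m + h) - Γ‖ + √‖Ymat x m - Γ‖ + 2 * √‖Γ‖) := by ring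

lemma continuous_Ymat (h : EuclideanSpace ℝ (Fin d)) : Continuous fun x => Ymat x h := by
  simp only [Ymat_eq_outerProd, outerProd]
  fun_prop

end Covariation

section Expectation

variable {F : Type*} [NormedAddCommGroup F] [InnerProductSpace ℝ F] [MeasurableSpace F]
  [BorelSpace F] [SecondCountableTopology F] {P : Measure Ω}

lemma measurable_hessIntegrand (A : F) : Measurable fun U : F => hessIntegrand U A := by
  unfold hessIntegrand
  fun_prop

omit [InnerProductSpace ℝ F] [MeasurableSpace F] [BorelSpace F] [SecondCountableTopology F] in
lemma ofReal_inv_norm_sq_le (z : F) : ENNReal.ofReal ‖z‖⁻¹ ^ 2 ≤ ((‖z‖₊ : ℝ≥0∞) ^ 2)⁻¹ := by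
  rw [ENNReal.inv_pow]
  gcongr
  rcases eq_or_ne z 0 with rfl | hz
  · simp
  · rw [ENNReal.ofReal_inv_of_pos (norm_pos_iff.mpr hz), ofReal_norm]
    rfl

omit [InnerProductSpace ℝ F] [SecondCountableTopology F] in
lemma ae_ne_zero_of_lintegral_inv_nnnorm_sq_ne_top {f : Ω → F} (hf : Measurable f)
    (hI : ∫⁻ ω, ((‖f ω‖₊ : ℝ≥0∞) ^ 2)⁻¹ ∂P ≠ ⊤) : ∀ᵐ ω ∂P, f ω ≠ 0 := by
  filter_upwards [ae_lt_top (by fun_prop) hI] with ω hω hzero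
  simp [hzero] at hω

lemma integrable_hessIntegrand [IsProbabilityMeasure P] {f : Ω → F} (hf : Measurable f)
    (hI : ∫⁻ ω, ((‖f ω‖₊ : ℝ≥0∞) ^ 2)⁻¹ ∂P ≠ ⊤) (A : F) :
    Integrable (fun ω => hessIntegrand (f ω) A) P := by
  have hinv : Integrable (fun ω => ‖f ω‖⁻¹) P := by
    refine ⟨by fun_prop, ?_⟩
    rw [hasFiniteIntegral_iff_ofReal (ae_of_all _ fun ω => by positivity)]
    calc ∫⁻ ω, ENNReal.ofReal ‖f ω‖⁻¹ ∂P
        ≤ (∫⁻ ω, ((‖f ω‖₊ : ℝ≥0∞) ^ 2)⁻¹ ∂P) ^ (1 / 2 : ℝ) := by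
          grw [lintegral_le_sqrt_lintegral_sq (by fun_prop),
            lintegral_mono fun ω => ofReal_inv_norm_sq_le (f ω)]
      _ < ⊤ := ENNReal.rpow_lt_top_of_nonneg (by norm_num) hI
  exact (hinv.const_mul (2 * ‖A‖)).mono' ((measurable_hessIntegrand A).comp hf).aestronglyMeasurable
    (ae_of_all _ fun ω => norm_hessIntegrand_le (f ω) A)

lemma norm_integral_hessIntegrand_sub_le [IsProbabilityMeasure P] {f g : Ω → F}
    (hf : Measurable f) (hg : Measurable g) {C : ℝ} (hC : 0 ≤ C)
    (hf2 : ∫⁻ ω, ((‖f ω‖₊ : ℝ≥0∞) ^ 2)⁻¹ ∂P ≤ ENNReal.ofReal C)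
    (hg2 : ∫⁻ ω, ((‖g ω‖₊ : ℝ≥0∞) ^ 2)⁻¹ ∂P ≤ ENNReal.ofReal C) {t s : ℝ} (ht : 0 ≤ t)
    (hs : 0 ≤ s) (hfg : ∀ ω, ‖f ω - g ω‖ ≤ t * (√‖f ω‖ + √‖g ω‖ + 2 * s)) (A : F) :
    ‖∫ ω, hessIntegrand (f ω) A ∂P - ∫ ω, hessIntegrand (g ω) A ∂P‖ ≤
      12 * (C * s + C ^ (3 / 4 : ℝ)) * t * ‖A‖ := by
  have hf2' := (hf2.trans_lt ENNReal.ofReal_lt_top).ne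
  have hg2' := (hg2.trans_lt ENNReal.ofReal_lt_top).ne
  have hmoments := lintegral_ofReal_cross_moments_le (μ := P)
    (u := fun ω => ‖f ω‖⁻¹) (v := fun ω => ‖g ω‖⁻¹) (by fun_prop) (by fun_prop)
    (fun ω => by positivity) (fun ω => by positivity) hC hs
    ((lintegral_mono fun ω => ofReal_inv_norm_sq_le (f ω)).trans hf2)
    ((lintegral_mono fun ω => ofReal_inv_norm_sq_le (g ω)).trans hg2)
  rw [← integral_sub (integrable_hessIntegrand hf hf2' A) (integrable_hessIntegrand hg hg2' A)]
  refine (norm_integral_le_lintegral_norm _).trans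
    (ENNReal.toReal_le_of_le_ofReal (by positivity) ?_)
  calc ∫⁻ ω, ENNReal.ofReal ‖hessIntegrand (f ω) A - hessIntegrand (g ω) A‖ ∂P
      ≤ ∫⁻ ω, ENNReal.ofReal (6 * t * ‖A‖) * ENNReal.ofReal (√‖f ω‖⁻¹ * ‖g ω‖⁻¹ +
          ‖f ω‖⁻¹ * √‖g ω‖⁻¹ + 2 * s * (‖f ω‖⁻¹ * ‖g ω‖⁻¹)) ∂P := by
        refine lintegral_mono_ae ?_
        filter_upwards [ae_ne_zero_of_lintegral_inv_nnnorm_sq_ne_top hf hf2',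
          ae_ne_zero_of_lintegral_inv_nnnorm_sq_ne_top hg hg2'] with ω hfω hgω
        rw [← ENNReal.ofReal_mul (by positivity)]
        exact ENNReal.ofReal_le_ofReal (norm_hessIntegrand_sub_le_of_norm_sub_le hfω hgω (hfg ω) A)
    _ ≤ ENNReal.ofReal (6 * t * ‖A‖) * ENNReal.ofReal (2 * C ^ (3 / 4 : ℝ) + 2 * s * C) := by
        rw [lintegral_const_mul' _ _ ENNReal.ofReal_ne_top]
        grw [hmoments]
    _ = ENNReal.ofReal (12 * (C * s + C ^ (3 / 4 : ℝ)) * t * ‖A‖) := by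
        rw [← ENNReal.ofReal_mul (by positivity)]
        ring_nf

end Expectation

theorem stmt_8_general
    {d : ℕ} (P : Measure Ω) [IsProbabilityMeasure P]
    (X : Ω → EuclideanSpace ℝ (Fin d)) (hX : Measurable X)
    -- `m` is the geometric median of `X`: the unique minimizer of `u ↦ E[‖X − u‖ − ‖X‖]`
    (m : EuclideanSpace ℝ (Fin d))
    -- `Γ` is the median covariation matrix: the unique minimizer of `G_m`
    (Γ : Mat d)
    -- Assumption 3(b)
    (C : ℝ) (hC : 0 < C)
    (hA3 : ∀ (h : EuclideanSpace ℝ (Fin d)) (V : Mat d),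
      (∫⁻ ω, (‖Ymat (X ω) h - V‖₊ : ℝ≥0∞)⁻¹ ∂P) ≤ ENNReal.ofReal C ∧
      (∫⁻ ω, ((‖Ymat (X ω) h - V‖₊ : ℝ≥0∞) ^ 2)⁻¹ ∂P) ≤ ENNReal.ofReal C)
    :
    ∀ (h : EuclideanSpace ℝ (Fin d)) (V : Mat d),
      ‖hessG P X (m + h) Γ V - hessG P X m Γ V‖ ≤
        12 * (C * Real.sqrt ‖Γ‖ + C ^ ((3 : ℝ) / 4)) * ‖h‖ * ‖V‖ := by
  intro h V
  have hY (k : EuclideanSpace ℝ (Fin d)) : Measurable fun ω => Ymat (X ω) k - Γ :=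
    ((continuous_Ymat k).measurable.comp hX).sub_const Γ
  exact norm_integral_hessIntegrand_sub_le (hY (m + h)) (hY m) hC.le (hA3 (m + h) Γ).2
    (hA3 m Γ).2 (norm_nonneg h) (Real.sqrt_nonneg _)
    (fun ω => norm_Ymat_add_sub_Ymat_le (X ω) m h Γ) V

/-- Lipschitz bound in the location parameter for the Hessian of `G` at `Γ_m`:
`‖(∇²G_{m+h}(Γ_m) − ∇²G_m(Γ_m))(V)‖_F ≤ 12(C√‖Γ_m‖_F + C^{3/4})‖h‖‖V‖_F`. -/
theorem stmt_8
    {d : ℕ} (hd : 1 ≤ d) (P : Measure Ω) [IsProbabilityMeasure P]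
    (X : Ω → EuclideanSpace ℝ (Fin d)) (hX : Measurable X)
    -- `m` is the geometric median of `X`: the unique minimizer of `u ↦ E[‖X − u‖ − ‖X‖]`
    (m : EuclideanSpace ℝ (Fin d))
    (hm : ∀ u, (∫ ω, (‖X ω - m‖ - ‖X ω‖) ∂P) ≤ ∫ ω, (‖X ω - u‖ - ‖X ω‖) ∂P)
    (hm_unique : ∀ u, (∀ v, (∫ ω, (‖X ω - u‖ - ‖X ω‖) ∂P) ≤
      ∫ ω, (‖X ω - v‖ - ‖X ω‖) ∂P) → u = m)
    -- `Γ` is the median covariation matrix: the unique minimizer of `G_m`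
    (Γ : Mat d)
    (hΓ : ∀ V, Gfun P X m Γ ≤ Gfun P X m V)
    (hΓ_unique : ∀ V, (∀ W, Gfun P X m V ≤ Gfun P X m W) → V = Γ)
    -- Assumption 1
    (hA1 : ∃ u₁ u₂ : EuclideanSpace ℝ (Fin d), ‖u₁‖ = 1 ∧ ‖u₂‖ = 1 ∧
      LinearIndependent ℝ ![u₁, u₂] ∧
      0 < evariance (fun ω => ⟪u₁, X ω⟫) P ∧ 0 < evariance (fun ω => ⟪u₂, X ω⟫) P)
    -- Assumption 2
    (hA2 : ∃ V₁ V₂ : Mat d, ‖V₁‖ = 1 ∧ ‖V₂‖ = 1 ∧ LinearIndependent ℝ ![V₁, V₂] ∧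
      0 < evariance (fun ω => ⟪V₁, Ymat (X ω) m⟫) P ∧
      0 < evariance (fun ω => ⟪V₂, Ymat (X ω) m⟫) P)
    -- Assumption 3(b)
    (C : ℝ) (hC : 0 < C)
    (hA3 : ∀ (h : EuclideanSpace ℝ (Fin d)) (V : Mat d),
      (∫⁻ ω, (‖Ymat (X ω) h - V‖₊ : ℝ≥0∞)⁻¹ ∂P) ≤ ENNReal.ofReal C ∧
      (∫⁻ ω, ((‖Ymat (X ω) h - V‖₊ : ℝ≥0∞) ^ 2)⁻¹ ∂P) ≤ ENNReal.ofReal C)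
    :
    ∀ (h : EuclideanSpace ℝ (Fin d)) (V : Mat d),
      ‖hessG P X (m + h) Γ V - hessG P X m Γ V‖ ≤
        12 * (C * Real.sqrt ‖Γ‖ + C ^ ((3 : ℝ) / 4)) * ‖h‖ * ‖V‖ :=
  stmt_8_general P X hX m Γ C hC hA3
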